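/- arXiv:1810.11196 — 4 statements merged into one kernel-verified Lean document; each statement's English description precedes it below -/
import Mathlib

section
/- Let A_1, ..., A_{n+2} be points in R^n, every n+1 of which are affinely independent (n ≥ 2), with A_{n+2} taken as the origin O. Fix a nonzero constant c. Then there exist unique points B_1, ..., B_{n+1} in R^n such that for each i ≤ n+1: (1) the vector OB_i is orthogonal to the affine hull of {A_j : j ≤ n+1, j ≠ i} translated to pass through the origin direction (i.e., orthogonal to all differences A_j - A_k for j,k ≤ n+1 distinct from i), and (2) OB_i · OA_j = c for all j ≤ n+1 with j ≠ i. Setting B_{n+2} = O, the resulting configuration B satisfies (A_i - A_j)·(B_k - B_l) = 0 for all pairwise distinct indices i, j, k, l. -/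
open scoped RealInnerProductSpace

/-!
For each `i`, the vectors `A j` (`j ≤ n+1`, `j ≠ i`) form a basis of `ℝⁿ`, since the affinely
independent family obtained by omitting `A_i` contains the origin `A_{n+2}`. Hence `B_i` is the
unique vector with `⟪B_i, A_j⟫ = c` on this basis, and condition (1) follows from (2).

For duality, extend `B` by `B_{n+2} = 0` and let `a p` be `0` at the last index and `1` elsewhere.
Then `⟪A p, B q⟫ = c · a p · a q` whenever `p ≠ q`, so for `{i, j}` disjoint from `{k, l}`,
`⟪A i - A j, B k - B l⟫ = c (a i - a j)(a k - a l)`; this vanishes because at most one of the four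
indices is the last one.
-/

theorem Module.Basis.existsUnique_inner_eq {E ι : Type*} [NormedAddCommGroup E]
    [InnerProductSpace ℝ E] [FiniteDimensional ℝ E] (b : Module.Basis ι ℝ E) (f : ι → ℝ) :
    ∃! x : E, ∀ i, ⟪x, b i⟫ = f i := by
  have hx : ∀ i, ⟪(InnerProductSpace.toDual ℝ E).symm
      (LinearMap.toContinuousLinearMap (b.constr ℝ f)), b i⟫ = f i := fun i => by
    rw [← InnerProductSpace.toDual_apply_apply, LinearIsometryEquiv.apply_symm_apply]
    exact b.constr_basis ℝ f i
  exact ⟨_, hx, fun y hy => InnerProductSpace.ext_inner_right_basis b fun i => by rw [hy i, hx i]⟩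

theorem LinearIndependent.existsUnique_inner_eq {E ι : Type*} [NormedAddCommGroup E]
    [InnerProductSpace ℝ E] [FiniteDimensional ℝ E] [Fintype ι] {v : ι → E}
    (hv : LinearIndependent ℝ v) (hcard : Fintype.card ι = Module.finrank ℝ E) (f : ι → ℝ) :
    ∃! x : E, ∀ i, ⟪x, v i⟫ = f i := by
  simpa using (basisOfLinearIndependentOfCardEqFinrank' v hv hcard).existsUnique_inner_eq f

theorem AffineIndependent.linearIndependent_comp_of_eq_zero {k V ι κ : Type*} [Ring k]
    [AddCommGroup V] [Module k V] {p : ι → V} (hp : AffineIndependent k p) {i₀ : ι}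
    (h₀ : p i₀ = 0) {e : κ → ι} (he : Function.Injective e) (hne : ∀ x, e x ≠ i₀) :
    LinearIndependent k (p ∘ e) := by
  have h := ((affineIndependent_iff_linearIndependent_vsub k p i₀).mp hp).comp
    (fun x => ⟨e x, hne x⟩) fun x y hxy => he (congrArg Subtype.val hxy)
  simpa [Function.comp_def, h₀] using h

theorem existsUnique_pi_of_forall_existsUnique {ι : Type*} {β : ι → Type*}
    {P : ∀ i, β i → Prop} (h : ∀ i, ∃! x, P i x) : ∃! f : ∀ i, β i, ∀ i, P i (f i) :=
  ⟨fun i => (h i).choose, fun i => (h i).choose_spec.1,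
    fun _ hf => funext fun i => (h i).unique (hf i) (h i).choose_spec.1⟩

theorem inner_sub_sub_eq_of_inner_eq_mul {E ι : Type*} [NormedAddCommGroup E]
    [InnerProductSpace ℝ E] {x y : ι → E} {f g : ι → ℝ}
    (h : ∀ p q, p ≠ q → ⟪x p, y q⟫ = f p * g q) {i j k l : ι}
    (hik : i ≠ k) (hil : i ≠ l) (hjk : j ≠ k) (hjl : j ≠ l) :
    ⟪x i - x j, y k - y l⟫ = (f i - f j) * (g k - g l) := by
  simp only [inner_sub_left, inner_sub_right, h _ _ hik, h _ _ hil, h _ _ hjk, h _ _ hjl]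
  ring

theorem sub_mul_sub_eq_zero_of_eq_off {ι R : Type*} [NonUnitalNonAssocRing R] {f : ι → R}
    {i₀ : ι} (hf : ∀ p q, p ≠ i₀ → q ≠ i₀ → f p = f q) {i j k l : ι}
    (hik : i ≠ k) (hil : i ≠ l) (hjk : j ≠ k) (hjl : j ≠ l) :
    (f i - f j) * (f k - f l) = 0 := by
  by_cases hi : i = i₀
  · subst hi
    rw [hf k l hik.symm hil.symm, sub_self, mul_zero]
  by_cases hj : j = i₀
  · subst hj
    rw [hf k l hjk.symm hjl.symm, sub_self, mul_zero]
  rw [hf i j hi hj, sub_self, zero_mul]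

section DualSimplex

variable {E : Type*} [NormedAddCommGroup E] [InnerProductSpace ℝ E] {m : ℕ}

theorem linearIndependent_castSucc_of_affineIndependent {A : Fin (m + 2) → E}
    (hO : A (Fin.last (m + 1)) = 0) (i : Fin (m + 1))
    (hA : AffineIndependent ℝ (fun j : {j : Fin (m + 2) // j ≠ i.castSucc} => A j.val)) :
    LinearIndependent ℝ (fun j : {j : Fin (m + 1) // j ≠ i} => A j.1.castSucc) :=
  hA.linearIndependent_comp_of_eq_zero (i₀ := ⟨Fin.last _, (Fin.castSucc_lt_last i).ne'⟩) hO
    (e := fun j : {j : Fin (m + 1) // j ≠ i} => ⟨j.1.castSucc, Fin.castSucc_injective _ |>.ne j.2⟩)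
    (fun _ _ hxy => Subtype.ext (Fin.castSucc_injective _ (congrArg Subtype.val hxy)))
    (fun j => Subtype.coe_ne_coe.mp (Fin.castSucc_lt_last j.1).ne)

theorem inner_eq_mul_of_inner_castSucc_eq {A : Fin (m + 1) → E} {B : Fin m → E} {c : ℝ}
    (hO : A (Fin.last m) = 0) (hB : ∀ i j, j ≠ i → ⟪B i, A j.castSucc⟫ = c) (p q : Fin (m + 1))
    (hpq : p ≠ q) :
    ⟪A p, (Fin.snoc B 0 : Fin (m + 1) → E) q⟫ =
      c * (Fin.snoc (fun _ => 1) 0 : Fin (m + 1) → ℝ) p *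
        (Fin.snoc (fun _ => 1) 0 : Fin (m + 1) → ℝ) q := by
  rcases Fin.eq_castSucc_or_eq_last p with ⟨p, rfl⟩ | rfl
  · rcases Fin.eq_castSucc_or_eq_last q with ⟨q, rfl⟩ | rfl
    · simp [real_inner_comm, hB q p ((Fin.castSucc_injective _).ne_iff.mp hpq)]
    · simp
  · simp [hO]

end DualSimplex

theorem dual_exists_unique_general (n : ℕ)
    (A : Fin (n + 2) → EuclideanSpace ℝ (Fin n))
    (hA : ∀ i : Fin (n + 2),
      AffineIndependent ℝ (fun j : {j : Fin (n + 2) // j ≠ i} => A j.val))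
    (hO : A (Fin.last (n + 1)) = 0)
    (c : ℝ) :
    (∃! (B : Fin (n + 1) → EuclideanSpace ℝ (Fin n)),
      (∀ i j k : Fin (n + 1), j ≠ i → k ≠ i →
        ⟪B i, A j.castSucc - A k.castSucc⟫ = 0) ∧
      (∀ i j : Fin (n + 1), j ≠ i → ⟪B i, A j.castSucc⟫ = c)) ∧
    (∀ B : Fin (n + 1) → EuclideanSpace ℝ (Fin n),
      ((∀ i j k : Fin (n + 1), j ≠ i → k ≠ i →
        ⟪B i, A j.castSucc - A k.castSucc⟫ = 0) ∧
       (∀ i j : Fin (n + 1), j ≠ i → ⟪B i, A j.castSucc⟫ = c)) →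
      ∀ i j k l : Fin (n + 2), i ≠ j → i ≠ k → i ≠ l → j ≠ k → j ≠ l → k ≠ l →
        ⟪A i - A j, (Fin.snoc B 0 : Fin (n + 2) → EuclideanSpace ℝ (Fin n)) k
          - (Fin.snoc B 0 : Fin (n + 2) → EuclideanSpace ℝ (Fin n)) l⟫ = 0) := by
  refine ⟨?_, fun B ⟨_, hB⟩ i j k l _ hik hil hjk hjl _ => ?_⟩
  · have hrow (i : Fin (n + 1)) : ∃! v : EuclideanSpace ℝ (Fin n),
        ∀ j : {j : Fin (n + 1) // j ≠ i}, ⟪v, A j.1.castSucc⟫ = c :=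
      (linearIndependent_castSucc_of_affineIndependent hO i (hA i.castSucc)).existsUnique_inner_eq
        (by simp [Fintype.card_subtype_compl]) _
    have hcond (B : Fin (n + 1) → EuclideanSpace ℝ (Fin n)) :
        ((∀ i j k : Fin (n + 1), j ≠ i → k ≠ i → ⟪B i, A j.castSucc - A k.castSucc⟫ = 0) ∧
          ∀ i j : Fin (n + 1), j ≠ i → ⟪B i, A j.castSucc⟫ = c) ↔
        ∀ i (j : {j : Fin (n + 1) // j ≠ i}), ⟪B i, A j.1.castSucc⟫ = c :=
      ⟨fun h i j => h.2 i j j.2, fun h => ⟨fun i j k hj hk => by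
        rw [inner_sub_right, h i ⟨j, hj⟩, h i ⟨k, hk⟩, sub_self], fun i j hj => h i ⟨j, hj⟩⟩⟩
    simpa only [hcond] using existsUnique_pi_of_forall_existsUnique hrow
  · rw [inner_sub_sub_eq_of_inner_eq_mul (inner_eq_mul_of_inner_castSucc_eq hO hB) hik hil hjk hjl,
      ← mul_sub, mul_assoc]
    exact mul_eq_zero_of_right _ <| sub_mul_sub_eq_zero_of_eq_off (i₀ := Fin.last (n + 1))
      (fun p q hp hq => by
        rw [← Fin.castSucc_castPred p hp, ← Fin.castSucc_castPred q hq]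
        simp only [Fin.snoc_castSucc]) hik hil hjk hjl

/-- Existence and uniqueness of the dual degenerate `(n+1)`-simplex `B` of a degenerate
`(n+1)`-simplex `A` in `ℝ^n` (with `A_{n+2}` at the origin), and the duality property
`(A_i - A_j) ⬝ (B_k - B_l) = 0` for pairwise distinct indices. -/
theorem dual_exists_unique (n : ℕ) (hn : 2 ≤ n)
    (A : Fin (n + 2) → EuclideanSpace ℝ (Fin n))
    (hA : ∀ i : Fin (n + 2),
      AffineIndependent ℝ (fun j : {j : Fin (n + 2) // j ≠ i} => A j.val))
    (hO : A (Fin.last (n + 1)) = 0)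
    (c : ℝ) (hc : c ≠ 0) :
    (∃! (B : Fin (n + 1) → EuclideanSpace ℝ (Fin n)),
      (∀ i j k : Fin (n + 1), j ≠ i → k ≠ i →
        ⟪B i, A j.castSucc - A k.castSucc⟫ = 0) ∧
      (∀ i j : Fin (n + 1), j ≠ i → ⟪B i, A j.castSucc⟫ = c)) ∧
    (∀ B : Fin (n + 1) → EuclideanSpace ℝ (Fin n),
      ((∀ i j k : Fin (n + 1), j ≠ i → k ≠ i →
        ⟪B i, A j.castSucc - A k.castSucc⟫ = 0) ∧
       (∀ i j : Fin (n + 1), j ≠ i → ⟪B i, A j.castSucc⟫ = c)) →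
      ∀ i j k l : Fin (n + 2), i ≠ j → i ≠ k → i ≠ l → j ≠ k → j ≠ l → k ≠ l →
        ⟪A i - A j, (Fin.snoc B 0 : Fin (n + 2) → EuclideanSpace ℝ (Fin n)) k
          - (Fin.snoc B 0 : Fin (n + 2) → EuclideanSpace ℝ (Fin n)) l⟫ = 0) :=
  dual_exists_unique_general n A hA hO c
end

section
/- Let A_1, ..., A_{n+2} and B_1, ..., B_{n+2} be dual configurations in R^n as above (satisfying (A_i - A_j)·(B_k - B_l) = 0 for distinct i,j,k,l, with every n+1 of each family affinely independent), and let r_i = (A_i - A_j)·(B_i - B_k) (independent of j,k ≠ i). Let α_1, ..., α_{n+2} be nonzero reals with ∑ α_i = 0 and ∑ α_i A_i = 0 (the affine dependence among the A_i). Then α_i r_i is independent of i; equivalently, the vector of reciprocals (1/r_1, ..., 1/r_{n+2}) is proportional to (α_1, ..., α_{n+2}). -/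
open scoped RealInnerProductSpace
open Finset

/-- For dual configurations `A`, `B` in `ℝ^n` with pairing values `r_i` and affine
dependence coefficients `α_i` of `A`, the product `α_i * r_i` is independent of `i`;
equivalently `(1/r_1, …, 1/r_{n+2})` is proportional to `(α_1, …, α_{n+2})`. -/
theorem alpha_r_constant (n : ℕ) (hn : 2 ≤ n)
    (A B : Fin (n + 2) → EuclideanSpace ℝ (Fin n))
    (hA : ∀ i : Fin (n + 2),
      AffineIndependent ℝ (fun j : {j : Fin (n + 2) // j ≠ i} => A j.val))
    (hB : ∀ i : Fin (n + 2),
      AffineIndependent ℝ (fun j : {j : Fin (n + 2) // j ≠ i} => B j.val))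
    (hdual : ∀ i j k l : Fin (n + 2), i ≠ j → i ≠ k → i ≠ l → j ≠ k → j ≠ l → k ≠ l →
      ⟪A i - A j, B k - B l⟫ = 0)
    (r : Fin (n + 2) → ℝ)
    (hr : ∀ i j k : Fin (n + 2), i ≠ j → i ≠ k → j ≠ k →
      ⟪A i - A j, B i - B k⟫ = r i)
    (α : Fin (n + 2) → ℝ) (hα0 : ∀ i, α i ≠ 0)
    (hsum : ∑ i, α i = 0) (hdep : ∑ i, α i • A i = 0) :
    ∃ C : ℝ, ∀ i, α i * r i = C := by
  refine ⟨α 0 * r 0, fun i => ?_⟩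
  rcases eq_or_ne i 0 with rfl | hi0
  · rfl
  -- pick m distinct from 0 and i
  have hcard : 0 < (({0, i} : Finset (Fin (n + 2)))ᶜ).card := by
    rw [Finset.card_compl]
    have h2 : ({0, i} : Finset (Fin (n + 2))).card ≤ 2 :=
      le_trans (Finset.card_insert_le _ _) (by simp)
    have : (4 : ℕ) ≤ Fintype.card (Fin (n + 2)) := by
      simp [Fintype.card_fin]; omega
    omega
  obtain ⟨m, hm⟩ := Finset.card_pos.mp hcard
  simp only [Finset.mem_compl, Finset.mem_insert, Finset.mem_singleton, not_or] at hm
  obtain ⟨hm0, hmi⟩ := hm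
  -- the key sum
  have hsum2 : ∑ k, α k • (A k - A m) = 0 := by
    rw [Finset.sum_congr rfl (fun k _ => smul_sub (α k) (A k) (A m))]
    rw [Finset.sum_sub_distrib, hdep, ← Finset.sum_smul, hsum, zero_smul, sub_zero]
  have key : ∑ k, α k * ⟪A k - A m, B 0 - B i⟫ = 0 := by
    have := congrArg (fun v => ⟪v, B 0 - B i⟫) hsum2
    simpa [sum_inner, inner_smul_left] using this
  have hzero : ∀ k ∈ (Finset.univ : Finset (Fin (n + 2))), k ∉ ({0, i} : Finset (Fin (n + 2))) →
      α k * ⟪A k - A m, B 0 - B i⟫ = 0 := by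
    intro k _ hk
    simp only [Finset.mem_insert, Finset.mem_singleton, not_or] at hk
    obtain ⟨hk0, hki⟩ := hk
    rcases eq_or_ne k m with rfl | hkm
    · simp
    · rw [hdual k m 0 i hkm hk0 hki hm0 hmi (Ne.symm hi0), mul_zero]
  have hsplit : ∑ k ∈ ({0, i} : Finset (Fin (n + 2))), α k * ⟪A k - A m, B 0 - B i⟫ = 0 := by
    rw [← key]
    exact Finset.sum_subset (Finset.subset_univ _) hzero
  rw [Finset.sum_pair (Ne.symm hi0)] at hsplit
  have h0 : ⟪A 0 - A m, B 0 - B i⟫ = r 0 := hr 0 m i (Ne.symm hm0) (Ne.symm hi0) hmi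
  have hi : ⟪A i - A m, B i - B 0⟫ = r i := hr i m 0 (Ne.symm hmi) hi0 hm0
  have hi' : ⟪A i - A m, B 0 - B i⟫ = - r i := by
    rw [← hi, ← inner_neg_right, neg_sub]
  rw [h0, hi'] at hsplit
  linarith
end

section
/- Let A_1, ..., A_{n+2} be points in R^n with every n+1 affinely independent, α the affine dependence coefficients (∑ α_i = 0, ∑ α_i A_i = 0, all α_i ≠ 0). For 0 ≤ k ≤ n+1 and any points P, Q in R^n, define c_{k+1} = ∑_F (∏_{A_s ∈ F} α_s) · det( (A_s - P)·(A_t - Q) )_{A_s, A_t ∈ F}, where the sum runs over all (k+1)-element subsets F of {A_1, ..., A_{n+2}}. Then c_{k+1} is independent of the choice of P and Q. -/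
/-!
Put `M = diag(α) · ((A_i - P)·(A_j - Q))_{i,j}`; then `c_{k+1}` is the sum of the
`(k+1) × (k+1)` principal minors of `M`, i.e. the coefficient of `X^{k+1}` in `det (1 + X M)`.
Since `∑ α_i (A_i - R) = 0` for every point `R`, we have `𝟙ᵀ M = 0` and `M α = 0`.
Moving `Q` changes `M` by a rank-one matrix `u 𝟙ᵀ` with `𝟙ᵀ u = 0`, and moving `P` changes it
by `α wᵀ` with `wᵀ α = 0`. Such perturbations leave `det (1 + X M)` unchanged: if `vᵀ M = 0`
and `vᵀ u = 0`, then `1 + X (M + u vᵀ) = (1 + X u vᵀ)(1 + X M)` and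
`det (1 + X u vᵀ) = 1 + X vᵀ u = 1`; the case `M u = 0` follows by transposing.
-/

open scoped RealInnerProductSpace
open Finset

namespace Matrix

variable {R n : Type*} [CommRing R] [Fintype n] [DecidableEq n]

theorem det_one_add_add_vecMulVec {M : Matrix n n R} {u v : n → R}
    (hM : v ᵥ* M = 0) (hu : v ⬝ᵥ u = 0) :
    det (1 + (M + vecMulVec u v)) = det (1 + M) := by
  have hfactor : 1 + (M + vecMulVec u v) = (1 + vecMulVec u v) * (1 + M) := by
    rw [Matrix.add_mul, Matrix.one_mul, vecMulVec_mul, vecMul_add, vecMul_one, hM, add_zero]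
    abel
  rw [hfactor, det_mul, vecMulVec_eq Unit, det_one_add_replicateCol_mul_replicateRow, hu,
    add_zero, one_mul]

theorem det_one_add_smul_add_vecMulVec (t : R) {M : Matrix n n R} {u v : n → R}
    (hM : v ᵥ* M = 0) (hu : v ⬝ᵥ u = 0) :
    det (1 + t • (M + vecMulVec u v)) = det (1 + t • M) := by
  rw [smul_add, ← smul_vecMulVec]
  exact det_one_add_add_vecMulVec (by rw [vecMul_smul, hM, smul_zero])
    (by rw [dotProduct_smul, hu, smul_zero])

def sumPrincipalMinors (k : ℕ) (M : Matrix n n R) : R :=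
  ∑ s ∈ univ.powersetCard k, (M.submatrix (Subtype.val : s → n) Subtype.val).det

theorem sumPrincipalMinors_transpose (k : ℕ) (M : Matrix n n R) :
    sumPrincipalMinors k Mᵀ = sumPrincipalMinors k M :=
  sum_congr rfl fun _ _ => by rw [← transpose_submatrix, det_transpose]

open Polynomial in
theorem sumPrincipalMinors_add_vecMulVec_of_vecMul_eq_zero (k : ℕ) {M : Matrix n n R}
    {u v : n → R} (hM : v ᵥ* M = 0) (hu : v ⬝ᵥ u = 0) :
    sumPrincipalMinors k (M + vecMulVec u v) = sumPrincipalMinors k M := by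
  simp only [sumPrincipalMinors, ← coeff_det_one_add_X_smul_eq_sum_minors]
  have hmap : (M + vecMulVec u v).map C = M.map C + vecMulVec (C ∘ u) (C ∘ v) := by
    ext i j; simp [vecMulVec_apply]
  rw [hmap, det_one_add_smul_add_vecMulVec]
  · ext j; rw [← RingHom.map_vecMul, hM]; simp
  · rw [← RingHom.map_dotProduct, hu, map_zero]

theorem sumPrincipalMinors_add_vecMulVec_of_mulVec_eq_zero (k : ℕ) {M : Matrix n n R}
    {u v : n → R} (hM : M *ᵥ u = 0) (hv : v ⬝ᵥ u = 0) :
    sumPrincipalMinors k (M + vecMulVec u v) = sumPrincipalMinors k M := by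
  rw [← sumPrincipalMinors_transpose, transpose_add, transpose_vecMulVec,
    sumPrincipalMinors_add_vecMulVec_of_vecMul_eq_zero k (by rwa [vecMul_transpose])
      (by rwa [dotProduct_comm]), sumPrincipalMinors_transpose]

end Matrix

open Matrix

section WeightedGram

variable {ι E : Type*} [NormedAddCommGroup E] [InnerProductSpace ℝ E]

def weightedGram (α : ι → ℝ) (A : ι → E) (P Q : E) : Matrix ι ι ℝ :=
  of fun i j => α i * ⟪A i - P, A j - Q⟫

theorem weightedGram_eq_add_vecMulVec_right (α : ι → ℝ) (A : ι → E) (P Q Q' : E) :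
    weightedGram α A P Q' =
      weightedGram α A P Q + vecMulVec (fun i => α i * ⟪A i - P, Q - Q'⟫) 1 := by
  ext i j
  simp only [weightedGram, Matrix.add_apply, of_apply, vecMulVec_apply, Pi.one_apply, mul_one,
    ← mul_add, ← inner_add_right, sub_add_sub_cancel]

theorem weightedGram_eq_add_vecMulVec_left (α : ι → ℝ) (A : ι → E) (P P' Q : E) :
    weightedGram α A P' Q =
      weightedGram α A P Q + vecMulVec α (fun j => ⟪P - P', A j - Q⟫) := by
  ext i j
  simp only [weightedGram, Matrix.add_apply, of_apply, vecMulVec_apply, ← mul_add,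
    ← inner_add_left, sub_add_sub_cancel]

variable [Fintype ι] {α : ι → ℝ} {A : ι → E}

theorem sum_mul_inner_sub_eq_zero (hsum : ∑ i, α i = 0) (hdep : ∑ i, α i • A i = 0)
    (P y : E) : ∑ i, α i * ⟪A i - P, y⟫ = 0 := by
  have hcentred : ∑ i, α i • (A i - P) = 0 := by
    simp only [smul_sub, sum_sub_distrib, ← sum_smul, hsum, hdep, zero_smul, sub_zero]
  simpa only [sum_inner, real_inner_smul_left, inner_zero_left] using
    congrArg (⟪·, y⟫) hcentred

variable [DecidableEq ι]

theorem sumPrincipalMinors_weightedGram_eq (hsum : ∑ i, α i = 0)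
    (hdep : ∑ i, α i • A i = 0) (k : ℕ) (P Q P' Q' : E) :
    sumPrincipalMinors k (weightedGram α A P Q) =
      sumPrincipalMinors k (weightedGram α A P' Q') := by
  have hcol : ∀ y, ∑ i, α i * ⟪A i - P', y⟫ = 0 := sum_mul_inner_sub_eq_zero hsum hdep P'
  have hrow : ∀ y, ∑ j, ⟪y, A j - Q⟫ * α j = 0 := fun y => by
    simpa only [real_inner_comm, mul_comm] using sum_mul_inner_sub_eq_zero hsum hdep Q y
  calc sumPrincipalMinors k (weightedGram α A P Q)
      = sumPrincipalMinors k (weightedGram α A P' Q) := by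
        rw [weightedGram_eq_add_vecMulVec_left α A P' P Q,
          sumPrincipalMinors_add_vecMulVec_of_mulVec_eq_zero]
        · ext i
          simp [mulVec, dotProduct, weightedGram, mul_assoc, ← mul_sum, hrow]
        · exact hrow _
    _ = sumPrincipalMinors k (weightedGram α A P' Q') := by
        rw [weightedGram_eq_add_vecMulVec_right α A P' Q' Q,
          sumPrincipalMinors_add_vecMulVec_of_vecMul_eq_zero]
        · ext j
          simp [vecMul, dotProduct, weightedGram, hcol]
        · simp [dotProduct, hcol]

theorem sumPrincipalMinors_weightedGram (k : ℕ) (P Q : E) :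
    sumPrincipalMinors k (weightedGram α A P Q) =
      ∑ F ∈ univ.powersetCard k, (∏ s ∈ F, α s) *
        det (of fun s t : {x // x ∈ F} => ⟪A s.val - P, A t.val - Q⟫) :=
  sum_congr rfl fun F _ => by
    rw [← prod_coe_sort, ← det_mul_column]
    rfl

end WeightedGram

theorem c_k_invariant_general (n k : ℕ)
    (A : Fin (n + 2) → EuclideanSpace ℝ (Fin n))
    (α : Fin (n + 2) → ℝ)
    (hsum : ∑ i, α i = 0) (hdep : ∑ i, α i • A i = 0) :
    ∀ P Q P' Q' : EuclideanSpace ℝ (Fin n),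
      ∑ F ∈ (Finset.univ : Finset (Fin (n + 2))).powersetCard (k + 1),
        (∏ s ∈ F, α s) *
          Matrix.det (Matrix.of fun s t : {x : Fin (n + 2) // x ∈ F} =>
            ⟪A s.val - P, A t.val - Q⟫)
      = ∑ F ∈ (Finset.univ : Finset (Fin (n + 2))).powersetCard (k + 1),
        (∏ s ∈ F, α s) *
          Matrix.det (Matrix.of fun s t : {x : Fin (n + 2) // x ∈ F} =>
            ⟪A s.val - P', A t.val - Q'⟫) := by
  intro P Q P' Q'
  rw [← sumPrincipalMinors_weightedGram, ← sumPrincipalMinors_weightedGram]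
  exact sumPrincipalMinors_weightedGram_eq hsum hdep (k + 1) P Q P' Q'

/-- Invariance of `c_{k+1}(α^{k+1})`: the sum over all `(k+1)`-element subsets `F` of the
vertices of `(∏_{s ∈ F} α_s) · det((A_s - P)·(A_t - Q))_{s,t ∈ F}` does not depend on the
choice of the base points `P` and `Q`. -/
theorem c_k_invariant (n k : ℕ) (hk : k ≤ n + 1)
    (A : Fin (n + 2) → EuclideanSpace ℝ (Fin n))
    (hA : ∀ i : Fin (n + 2),
      AffineIndependent ℝ (fun j : {j : Fin (n + 2) // j ≠ i} => A j.val))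
    (α : Fin (n + 2) → ℝ) (hα0 : ∀ i, α i ≠ 0)
    (hsum : ∑ i, α i = 0) (hdep : ∑ i, α i • A i = 0) :
    ∀ P Q P' Q' : EuclideanSpace ℝ (Fin n),
      ∑ F ∈ (Finset.univ : Finset (Fin (n + 2))).powersetCard (k + 1),
        (∏ s ∈ F, α s) *
          Matrix.det (Matrix.of fun s t : {x : Fin (n + 2) // x ∈ F} =>
            ⟪A s.val - P, A t.val - Q⟫)
      = ∑ F ∈ (Finset.univ : Finset (Fin (n + 2))).powersetCard (k + 1),
        (∏ s ∈ F, α s) *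
          Matrix.det (Matrix.of fun s t : {x : Fin (n + 2) // x ∈ F} =>
            ⟪A s.val - P', A t.val - Q'⟫) :=
  c_k_invariant_general n k A α hsum hdep
end

section
/- Let A_1, ..., A_{n+2} and B_1, ..., B_{n+2} be dual configurations in R^n (i.e., (A_i - A_j)·(B_k - B_l) = 0 for all pairwise distinct i,j,k,l, with every n+1 of each family affinely independent), normalized so their affine dependence coefficients coincide: α_i with ∑ α_i = 0, ∑ α_i A_i = 0, ∑ α_i B_i = 0. Define C_1, C_2 as the n×n matrices with rows A_i - A_{n+1}, A_i - A_{n+2} (i ≤ n), E_1, E_2 the matrices with rows B_i - B_{n+1}, B_i - B_{n+2}, and D = diag(α_1,...,α_n). Then (C_2^T D C_1)(E_2^T D E_1) = c·I_n for some nonzero constant c. -/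
open Finset Matrix

/-!
Duality makes the mixed products `C₁ E₂ᵀ` and `E₁ C₂ᵀ` diagonal, with entries
`r_i = (A_i - A_j) ⬝ᵥ (B_i - B_k)`. Dotting the dependence relation `∑ αₖ (Bₖ - Bₗ) = 0` with
`A_i - A_j` shows that `α_i r_i` is a symmetric function of `(i, j, k)`, hence a constant `c`
on the relevant triples. So `D C₁ E₂ᵀ = c • 1` and `E₁ C₂ᵀ D = c • 1`; the latter gives
`C₂ᵀ D E₁ = c • 1` because `E₁` is invertible, and the product is `c² • 1`.
-/

variable {ι m R : Type*} [Fintype m] [CommRing R]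

def IsDualConfig (A B : ι → m → R) : Prop :=
  ∀ i j k l, i ≠ j → i ≠ k → i ≠ l → j ≠ k → j ≠ l → k ≠ l → (A i - A j) ⬝ᵥ (B k - B l) = 0

/-- The paper's `α_i r_i`. -/
def dualWeight (A B : ι → m → R) (α : ι → R) (i j k : ι) : R :=
  α i * ((A i - A j) ⬝ᵥ (B i - B k))

namespace IsDualConfig

variable {A B : ι → m → R}

theorem symm (h : IsDualConfig A B) : IsDualConfig B A :=
  fun i j k l hij hik hil hjk hjl hkl => by
    rw [dotProduct_comm]
    exact h k l i j hkl hik.symm hjk.symm hil.symm hjl.symm hij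

theorem dotProduct_sub_congr_left (h : IsDualConfig A B) {i j j' k : ι} (hji : j ≠ i)
    (hj'i : j' ≠ i) (hjk : j ≠ k) (hj'k : j' ≠ k) (hik : i ≠ k) :
    (A i - A j) ⬝ᵥ (B i - B k) = (A i - A j') ⬝ᵥ (B i - B k) := by
  obtain rfl | hjj' := eq_or_ne j j'
  · rfl
  rw [show A i - A j = (A i - A j') - (A j - A j') by abel, sub_dotProduct,
    h j j' i k hjj' hji hjk hj'i hj'k hik, sub_zero]

variable [Fintype ι] {α : ι → R}

/-- Dotting `∑ₖ αₖ (Bₖ - Bₗ) = 0` with `A_i - A_j` kills every term but those at `k = i, j`. -/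
theorem dualWeight_swap₁₂ (h : IsDualConfig A B) (hsum : ∑ i, α i = 0)
    (hdep : ∑ i, α i • B i = 0) {i j k : ι} (hij : i ≠ j) (hik : i ≠ k) (hjk : j ≠ k) :
    dualWeight A B α i j k = dualWeight A B α j i k := by
  have hdepk : ∑ l, α l • (B l - B k) = 0 := by
    simp only [smul_sub, sum_sub_distrib, ← sum_smul, hsum, hdep, zero_smul, sub_zero]
  have hterms : ∑ l, α l * ((A i - A j) ⬝ᵥ (B l - B k)) = 0 := by
    simpa only [dotProduct_sum, dotProduct_smul, smul_eq_mul, dotProduct_zero]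
      using congrArg (dotProduct (A i - A j)) hdepk
  rw [Fintype.sum_eq_add i j hij fun l ⟨hli, hlj⟩ => by
    obtain rfl | hlk := eq_or_ne l k
    · simp
    · rw [h i j l k hij hli.symm hik hlj.symm hjk hlk, mul_zero]] at hterms
  rw [dualWeight, dualWeight, ← neg_sub (A i), neg_dotProduct, mul_neg]
  linear_combination hterms

theorem dualWeight_swap₁₃ (h : IsDualConfig A B) (hsum : ∑ i, α i = 0)
    (hdep : ∑ i, α i • A i = 0) {i j k : ι} (hij : i ≠ j) (hik : i ≠ k) (hjk : j ≠ k) :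
    dualWeight A B α i j k = dualWeight A B α k j i := by
  have := h.symm.dualWeight_swap₁₂ hsum hdep hik hij hjk.symm
  simpa only [dualWeight, dotProduct_comm (A _ - _)] using this

theorem dualWeight_swap₂₃ (h : IsDualConfig A B) (hsum : ∑ i, α i = 0)
    (hdepA : ∑ i, α i • A i = 0) (hdepB : ∑ i, α i • B i = 0) {i j k : ι} (hij : i ≠ j)
    (hik : i ≠ k) (hjk : j ≠ k) :
    dualWeight A B α i j k = dualWeight A B α i k j := by
  rw [h.dualWeight_swap₁₂ hsum hdepB hij hik hjk, h.dualWeight_swap₁₃ hsum hdepA hij.symm hjk hik,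
    h.dualWeight_swap₁₂ hsum hdepB hik.symm hjk.symm hij]

theorem dualWeight_congr_fst (h : IsDualConfig A B) (hsum : ∑ i, α i = 0)
    (hdep : ∑ i, α i • B i = 0) {i i' j k : ι} (hij : i ≠ j) (hik : i ≠ k) (hi'j : i' ≠ j)
    (hi'k : i' ≠ k) (hjk : j ≠ k) :
    dualWeight A B α i j k = dualWeight A B α i' j k := by
  rw [h.dualWeight_swap₁₂ hsum hdep hij hik hjk, h.dualWeight_swap₁₂ hsum hdep hi'j hi'k hjk,
    dualWeight, dualWeight, h.dotProduct_sub_congr_left hij hi'j hik hi'k hjk]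

theorem dualWeight_eq_swap_of_ne (h : IsDualConfig A B) (hsum : ∑ i, α i = 0)
    (hdepA : ∑ i, α i • A i = 0) (hdepB : ∑ i, α i • B i = 0) {i i' j k : ι} (hij : i ≠ j)
    (hik : i ≠ k) (hi'j : i' ≠ j) (hi'k : i' ≠ k) (hjk : j ≠ k) :
    dualWeight A B α i j k = dualWeight A B α i' k j := by
  rw [h.dualWeight_swap₂₃ hsum hdepA hdepB hij hik hjk,
    h.dualWeight_congr_fst hsum hdepB hik hij hi'k hi'j hjk.symm]

end IsDualConfig

theorem IsDualConfig.of_sub_mul_transpose_of_sub {κ : Type*} [Fintype κ] [DecidableEq κ]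
    {A B : ι → m → R} (h : IsDualConfig A B) {f : κ → ι} (hf : Function.Injective f) {p q : ι}
    (hfp : ∀ i, f i ≠ p) (hfq : ∀ i, f i ≠ q) (hpq : p ≠ q) :
    (of fun i => A (f i) - A p) * (of fun i => B (f i) - B q)ᵀ
      = diagonal fun i => (A (f i) - A p) ⬝ᵥ (B (f i) - B q) := by
  ext i j
  rw [mul_apply']
  obtain rfl | hij := eq_or_ne i j
  · rw [diagonal_apply_eq]
    rfl
  · rw [diagonal_apply_ne _ hij]
    exact h (f i) p (f j) q (hfp i) (hf.ne hij) (hfq i) (hfp j).symm hpq (hfq j)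

theorem AffineIndependent.linearIndependent_vsub_comp {κ k V P ι' : Type*} [Ring k]
    [AddCommGroup V] [Module k V] [AddTorsor V P] {p : ι' → P} (hp : AffineIndependent k p)
    {f : κ → ι'} (hf : Function.Injective f) {b : ι'} (hfb : ∀ i, f i ≠ b) :
    LinearIndependent k fun i => p (f i) -ᵥ p b :=
  ((affineIndependent_iff_linearIndependent_vsub k p b).mp hp).comp (fun i => ⟨f i, hfb i⟩)
    fun _ _ hij => hf (congrArg Subtype.val hij)

theorem isUnit_of_sub_of_affineIndependent {κ K : Type*} [Fintype κ] [DecidableEq κ] [Field K]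
    {B : ι → κ → K} {q : ι} (hB : AffineIndependent K fun j : {j // j ≠ q} => B j)
    {f : κ → ι} (hf : Function.Injective f) {p : ι} (hfp : ∀ i, f i ≠ p) (hfq : ∀ i, f i ≠ q)
    (hpq : p ≠ q) :
    IsUnit (of fun i => B (f i) - B p) :=
  linearIndependent_rows_iff_isUnit.mp <|
    hB.linearIndependent_vsub_comp (f := fun i => ⟨f i, hfq i⟩) (b := ⟨p, hpq⟩)
      (fun _ _ hij => hf (congrArg Subtype.val hij)) fun i hi => hfp i (congrArg Subtype.val hi)

theorem mul_eq_of_isUnit_of_commute {M : Type*} [Monoid M] {x y z : M} (hx : IsUnit x)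
    (hxz : Commute x z) (h : x * y = z) : y * x = z :=
  hx.mul_left_cancel (by rw [← mul_assoc, h, hxz.eq])

theorem Matrix.mul_mul_eq_smul_one {κ : Type*} [Fintype κ] [DecidableEq κ]
    {X Y Z W D : Matrix κ κ R} {c : R} (hXY : D * (X * Y) = c • 1) (hZW : Z * (W * D) = c • 1)
    (hZ : IsUnit Z) :
    (W * D * X) * (Y * D * Z) = (c * c) • 1 := by
  have hWDZ : W * D * Z = c • 1 :=
    mul_eq_of_isUnit_of_commute hZ ((Commute.one_right _).smul_right c) hZW
  calc W * D * X * (Y * D * Z) = W * (D * (X * Y) * D) * Z := by simp only [Matrix.mul_assoc]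
    _ = c • (W * D * Z) := by
        rw [hXY, Matrix.smul_mul, Matrix.one_mul, Matrix.mul_smul, Matrix.smul_mul,
          Matrix.mul_assoc]
    _ = (c * c) • 1 := by rw [hWDZ, smul_smul]

theorem IsDualConfig.exists_mul_eq_smul_one {κ K : Type*} [Fintype κ] [DecidableEq κ]
    [Nonempty κ] [Field K] [Fintype ι] {A B : ι → κ → K} (h : IsDualConfig A B) {α : ι → K}
    (hα : ∀ i, α i ≠ 0) (hsum : ∑ i, α i = 0) (hdepA : ∑ i, α i • A i = 0)
    (hdepB : ∑ i, α i • B i = 0) {f : κ → ι} (hf : Function.Injective f) {p q : ι}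
    (hfp : ∀ i, f i ≠ p) (hfq : ∀ i, f i ≠ q) (hpq : p ≠ q)
    (hA : AffineIndependent K fun j : {j // j ≠ p} => A j)
    (hB : AffineIndependent K fun j : {j // j ≠ q} => B j) :
    ∃ c : K, c ≠ 0 ∧
      ((of fun i => A (f i) - A q)ᵀ * diagonal (fun i => α (f i)) * of fun i => A (f i) - A p) *
        ((of fun i => B (f i) - B q)ᵀ * diagonal (fun i => α (f i)) *
          of fun i => B (f i) - B p) = c • 1 := by
  obtain ⟨i₀⟩ := ‹Nonempty κ›
  set c := dualWeight A B α (f i₀) q p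
  have hwqp : ∀ i, dualWeight A B α (f i) q p = c := fun i =>
    h.dualWeight_congr_fst hsum hdepB (hfq i) (hfp i) (hfq i₀) (hfp i₀) hpq.symm
  have hwpq : ∀ i, dualWeight A B α (f i) p q = c := fun i =>
    h.dualWeight_eq_swap_of_ne hsum hdepA hdepB (hfp i) (hfq i) (hfp i₀) (hfq i₀) hpq
  have hE₁_unit := isUnit_of_sub_of_affineIndependent hB hf hfp hfq hpq
  have hC₂_unit := isUnit_of_sub_of_affineIndependent hA hf hfq hfp hpq.symm
  have hDC₁E₂ : diagonal (fun i => α (f i)) *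
      ((of fun i => A (f i) - A p) * (of fun i => B (f i) - B q)ᵀ) = c • 1 := by
    rw [h.of_sub_mul_transpose_of_sub hf hfp hfq hpq, diagonal_mul_diagonal,
      smul_one_eq_diagonal]
    exact congrArg diagonal (funext hwpq)
  have hE₁C₂ := h.symm.of_sub_mul_transpose_of_sub hf hfp hfq hpq
  have hE₁C₂D : (of fun i => B (f i) - B p) *
      ((of fun i => A (f i) - A q)ᵀ * diagonal fun i => α (f i)) = c • 1 := by
    rw [← Matrix.mul_assoc, hE₁C₂, diagonal_mul_diagonal, smul_one_eq_diagonal]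
    refine congrArg diagonal (funext fun i => ?_)
    rw [← hwqp i, dualWeight, dotProduct_comm, mul_comm]
  have hc : c ≠ 0 := by
    have hunit := hE₁C₂ ▸ hE₁_unit.mul ((isUnit_transpose _).mpr hC₂_unit)
    have hr := (isUnit_diagonal.mp hunit).apply i₀
    rw [dotProduct_comm] at hr
    exact mul_ne_zero (hα _) hr.ne_zero
  exact ⟨c * c, mul_ne_zero hc hc, Matrix.mul_mul_eq_smul_one hDC₁E₂ hE₁C₂D hE₁_unit⟩

/-- For dual configurations `A`, `B` in `ℝ^n` with common affine dependence coefficients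
`α`, the product `(C₂ᵀ D C₁)(E₂ᵀ D E₁)` is a nonzero scalar multiple of the identity. -/
theorem matrix_product_scalar_identity (n : ℕ) (hn : 2 ≤ n)
    (A B : Fin (n + 2) → (Fin n → ℝ))
    (hA : ∀ i : Fin (n + 2),
      AffineIndependent ℝ (fun j : {j : Fin (n + 2) // j ≠ i} => A j.val))
    (hB : ∀ i : Fin (n + 2),
      AffineIndependent ℝ (fun j : {j : Fin (n + 2) // j ≠ i} => B j.val))
    (hdual : ∀ i j k l : Fin (n + 2), i ≠ j → i ≠ k → i ≠ l → j ≠ k → j ≠ l → k ≠ l →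
      (A i - A j) ⬝ᵥ (B k - B l) = 0)
    (α : Fin (n + 2) → ℝ) (hα0 : ∀ i, α i ≠ 0) (hsum : ∑ i, α i = 0)
    (hdepA : ∑ i, α i • A i = 0) (hdepB : ∑ i, α i • B i = 0)
    (C₁ C₂ E₁ E₂ D : Matrix (Fin n) (Fin n) ℝ)
    (hC₁ : C₁ = Matrix.of fun i j => (A (Fin.castAdd 2 i) - A ⟨n, by omega⟩) j)
    (hC₂ : C₂ = Matrix.of fun i j => (A (Fin.castAdd 2 i) - A (Fin.last (n + 1))) j)
    (hE₁ : E₁ = Matrix.of fun i j => (B (Fin.castAdd 2 i) - B ⟨n, by omega⟩) j)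
    (hE₂ : E₂ = Matrix.of fun i j => (B (Fin.castAdd 2 i) - B (Fin.last (n + 1))) j)
    (hD : D = Matrix.diagonal fun i => α (Fin.castAdd 2 i)) :
    ∃ c : ℝ, c ≠ 0 ∧
      (C₂ᵀ * D * C₁) * (E₂ᵀ * D * E₁) = c • (1 : Matrix (Fin n) (Fin n) ℝ) := by
  subst hC₁ hC₂ hE₁ hE₂ hD
  have : Nonempty (Fin n) := ⟨⟨0, by omega⟩⟩
  have hpq : (⟨n, by omega⟩ : Fin (n + 2)) ≠ Fin.last (n + 1) := by simp [Fin.ext_iff]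
  exact IsDualConfig.exists_mul_eq_smul_one hdual hα0 hsum hdepA hdepB (Fin.castAdd_injective n 2)
    (fun i h => by simp [Fin.ext_iff] at h; omega) (fun i h => by simp [Fin.ext_iff] at h; omega)
    hpq (hA _) (hB _)
end
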